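/- Let S = σ(H) + σ(H') where σ(H) = {E_n} and σ(H') = {E'_m} are the spectra of two Hamiltonians, and let p, p' be positive functions on σ(H), σ(H') respectively such that p(E_n)/p(E_m) = p'(E'_s)/p'(E'_r) whenever E_n - E_m = E'_s - E'_r. Fix E₀ ∈ σ(H) and E'_r ∈ σ(H'). Then the function Φ on (σ(H) - E₀) + (σ(H') - E'_r) defined by Φ(E - E₀ + E' - E'_r) = p(E)p'(E')/(p(E₀)p'(E'_r)) is well-defined and satisfies Φ(x + y) = Φ(x)Φ(y) for all x ∈ σ(H) - E₀, y ∈ σ(H') - E'_r. -/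

import Mathlib

/-!
Equal gaps `E - F = F' - E'` give `p E / p F = p' F' / p' E'`, i.e. `p E * p' E' = p F * p' F'`.
Since `(E - E₀) + (E' - Er) = (F - E₀) + (F' - Er)` is exactly such a gap equality, the product
`p E * p' E'` depends only on the shifted sum, so `Φ` is well defined as the extension of
`(E, E') ↦ p E * p' E' / (p E₀ * p' Er)` along that sum. Multiplicativity is then the identity
`p E p' E' · p E₀ p' Er = p E p' Er · p E₀ p' E'`.
-/

open Function

section
variable {S S' : Set ℝ} {p p' : ℝ → ℝ}

theorem mul_eq_mul_of_sub_eq_sub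
    (hp : ∀ E ∈ S, p E ≠ 0) (hp' : ∀ E' ∈ S', p' E' ≠ 0)
    (hgaps : ∀ En ∈ S, ∀ Em ∈ S, ∀ Es ∈ S', ∀ Er ∈ S',
      En - Em = Es - Er → p En / p Em = p' Es / p' Er)
    {E F E' F' : ℝ} (hE : E ∈ S) (hF : F ∈ S) (hE' : E' ∈ S') (hF' : F' ∈ S')
    (h : E - F = F' - E') : p E * p' E' = p F * p' F' := by
  have hratio := hgaps E hE F hF F' hF' E' hE' h
  rwa [div_eq_div_iff (hp F hF) (hp' E' hE'), mul_comm (p' F')] at hratio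

theorem factorsThrough_mul_shifted_add
    (hp : ∀ E ∈ S, p E ≠ 0) (hp' : ∀ E' ∈ S', p' E' ≠ 0)
    (hgaps : ∀ En ∈ S, ∀ Em ∈ S, ∀ Es ∈ S', ∀ Er ∈ S',
      En - Em = Es - Er → p En / p Em = p' Es / p' Er)
    (c c' : ℝ) :
    FactorsThrough (fun e : S × S' => p e.1 * p' e.2)
      (fun e : S × S' => (e.1 - c) + (e.2 - c')) := by
  rintro ⟨⟨E, hE⟩, ⟨E', hE'⟩⟩ ⟨⟨F, hF⟩, ⟨F', hF'⟩⟩ h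
  exact mul_eq_mul_of_sub_eq_sub hp hp' hgaps hE hF hE' hF' (by simp only at h; linarith)

end

/-- Lemma 6 of the paper: if equal energy gaps give equal population ratios, then the
function `Φ` relating populations of sums of shifted energies is well defined and
satisfies the Cauchy functional equation. -/
theorem phi_well_defined_and_multiplicative
    (S S' : Set ℝ) (p p' : ℝ → ℝ)
    (hp : ∀ E ∈ S, 0 < p E) (hp' : ∀ E' ∈ S', 0 < p' E')
    (hgaps : ∀ En ∈ S, ∀ Em ∈ S, ∀ Es ∈ S', ∀ Er ∈ S',
      En - Em = Es - Er → p En / p Em = p' Es / p' Er)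
    (E₀ : ℝ) (hE₀ : E₀ ∈ S) (Er : ℝ) (hEr : Er ∈ S') :
    ∃ Φ : ℝ → ℝ,
      (∀ E ∈ S, ∀ E' ∈ S',
        Φ ((E - E₀) + (E' - Er)) = p E * p' E' / (p E₀ * p' Er)) ∧
      (∀ E ∈ S, ∀ E' ∈ S',
        Φ ((E - E₀) + (E' - Er)) = Φ (E - E₀) * Φ (E' - Er)) := by
  have hfactors := factorsThrough_mul_shifted_add (fun E hE => (hp E hE).ne')
    (fun E' hE' => (hp' E' hE').ne') hgaps E₀ Er
  set Φ := extend (fun e : S × S' => (e.1 - E₀) + (e.2 - Er))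
    (fun e => p e.1 * p' e.2 / (p E₀ * p' Er)) 0
  have hΦ : ∀ E ∈ S, ∀ E' ∈ S',
      Φ ((E - E₀) + (E' - Er)) = p E * p' E' / (p E₀ * p' Er) := fun E hE E' hE' =>
    FactorsThrough.extend_apply (fun _ _ h => congrArg (· / (p E₀ * p' Er)) (hfactors h)) 0
      ((⟨E, hE⟩, ⟨E', hE'⟩) : S × S')
  refine ⟨Φ, hΦ, fun E hE E' hE' => ?_⟩
  have hΦE : Φ (E - E₀) = p E * p' Er / (p E₀ * p' Er) := by
    simpa using hΦ E hE Er hEr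
  have hΦE' : Φ (E' - Er) = p E₀ * p' E' / (p E₀ * p' Er) := by
    simpa using hΦ E₀ hE₀ E' hE'
  have hpE₀ : p E₀ ≠ 0 := (hp E₀ hE₀).ne'
  have hp'Er : p' Er ≠ 0 := (hp' Er hEr).ne'
  rw [hΦ E hE E' hE', hΦE, hΦE']
  field_simp
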